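/- The 4×4 unitary matrix R_4 = (q/√2)·[[1,1,0,0],[-1,1,0,0],[0,0,1,-1],[0,0,1,1]] (q ∈ 𝕋) is a solution of the Yang-Baxter equation on ℂ²⊗ℂ², and its spectrum is {q(1+i)/√2, q(1-i)/√2}. -/

import Mathlib

open Matrix Kronecker Complex

/-- The algebra `M_d ⊗ M_d` realized as matrices indexed by pairs. -/
abbrev MM (d : ℕ) := Matrix (Fin d × Fin d) (Fin d × Fin d) ℂ

/-- `R ⊗ 1` acting on the triple tensor product `ℂ^d ⊗ ℂ^d ⊗ ℂ^d`. -/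
def amp1 {d : ℕ} (R : MM d) :
    Matrix (Fin d × Fin d × Fin d) (Fin d × Fin d × Fin d) ℂ :=
  Matrix.of fun x y => R (x.1, x.2.1) (y.1, y.2.1) * (if x.2.2 = y.2.2 then 1 else 0)

/-- `1 ⊗ R` acting on the triple tensor product `ℂ^d ⊗ ℂ^d ⊗ ℂ^d`. -/
def amp2 {d : ℕ} (R : MM d) :
    Matrix (Fin d × Fin d × Fin d) (Fin d × Fin d × Fin d) ℂ :=
  Matrix.of fun x y => (if x.1 = y.1 then 1 else 0) * R (x.2.1, x.2.2) (y.2.1, y.2.2)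

/-- The Yang-Baxter equation `(R⊗1)(1⊗R)(R⊗1) = (1⊗R)(R⊗1)(1⊗R)`. -/
def YBE {d : ℕ} (R : MM d) : Prop :=
  amp1 R * amp2 R * amp1 R = amp2 R * amp1 R * amp2 R

/-- The R-matrix `R₄ = (q/√2)·[[1,1,0,0],[-1,1,0,0],[0,0,1,-1],[0,0,1,1]]` on `ℂ²⊗ℂ²`,
in the lexicographic tensor basis `e₀⊗e₀, e₀⊗e₁, e₁⊗e₀, e₁⊗e₁`. -/
noncomputable def R4 (q : ℂ) : MM 2 :=
  (q / (Real.sqrt 2 : ℂ)) • Matrix.of fun p r =>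
    if p.1 = r.1 then
      (if p.1 = 0 then
        (if p.2 = 0 then 1 else if r.2 = 0 then -1 else 1)
      else
        (if p.2 = 0 then (if r.2 = 0 then 1 else -1) else 1))
    else 0

/-!
Write `R₄ = c • (1 + K)` with `c = q/√2` and `K = σ_z ⊗ iσ_y`. Then `K` is skew-Hermitian with
`K² = -1`, so `(1 + K)ᴴ(1 + K) = 1 - K² = 2`, which together with `|c|² = 1/2` gives unitarity.
Since `K² = -1` and `K ≠ ±i`, the spectrum of `K` is `{i, -i}`, hence that of `R₄` is `c(1 ± i)`.
For the Yang-Baxter equation, `a = K ⊗ 1` and `b = 1 ⊗ K` are square roots of `-1` that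
anticommute (because `σ_z` and `iσ_y` anticommute in the middle factor), and for any such pair
both `(1 + a)(1 + b)(1 + a)` and `(1 + b)(1 + a)(1 + b)` equal `2(a + b)`.
-/

theorem braid_one_add_of_anticommute {A : Type*} [Ring A] {a b : A} (ha : a * a = -1)
    (hb : b * b = -1) (hab : a * b = -(b * a)) :
    (1 + a) * (1 + b) * (1 + a) = (1 + b) * (1 + a) * (1 + b) := by
  have haba : a * b * a = b := by rw [hab, neg_mul, mul_assoc, ha]; noncomm_ring
  have hbab : b * a * b = a := by
    rw [← neg_neg (b * a), ← hab, neg_mul, mul_assoc, hb]; noncomm_ring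
  calc (1 + a) * (1 + b) * (1 + a) = 1 + 2 • a + b + (a * b + b * a) + a * a + a * b * a := by
        noncomm_ring
    _ = 1 + 2 • b + a + (a * b + b * a) + b * b + b * a * b := by
        rw [ha, hb, haba, hbab]; abel
    _ = (1 + b) * (1 + a) * (1 + b) := by noncomm_ring

theorem smul_one_add_mem_unitary {A : Type*} [Ring A] [StarRing A] [Algebra ℂ A] [StarModule ℂ A]
    {k : A} (hk : star k = -k) (hkk : k * k = -1) {c : ℂ} (hc : star c * c = 2⁻¹) :
    c • (1 + k) ∈ unitary A := by
  have hstar : star (c • (1 + k)) = star c • (1 - k) := by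
    rw [star_smul, star_add, star_one, hk, sub_eq_add_neg]
  have hleft : (1 - k) * (1 + k) = (2 : ℂ) • 1 := by
    rw [two_smul, ← sub_neg_eq_add 1 (1 : A), ← hkk]; noncomm_ring
  have hright : (1 + k) * (1 - k) = (2 : ℂ) • 1 := by
    rw [two_smul, ← sub_neg_eq_add 1 (1 : A), ← hkk]; noncomm_ring
  have hhalf : ((2 : ℂ)⁻¹ * 2) • (1 : A) = 1 := by rw [inv_mul_cancel₀ two_ne_zero, one_smul]
  rw [Unitary.mem_iff, hstar, smul_mul_smul_comm, smul_mul_smul_comm, mul_comm c, hc, hleft,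
    hright, smul_smul]
  exact ⟨hhalf, hhalf⟩

open Polynomial in
theorem spectrum_subset_of_mul_self_eq_neg_one {A : Type*} [Ring A] [Algebra ℂ A] {k : A}
    (hk : k * k = -1) : spectrum ℂ k ⊆ {I, -I} := by
  nontriviality A
  refine Set.image_subset_iff.mp (spectrum.subset_polynomial_aeval k (X ^ 2 + 1)) |>.trans ?_
  intro x hx
  have : x ^ 2 = I ^ 2 := by
    simpa [pow_two k, hk, I_sq, add_eq_zero_iff_eq_neg] using hx
  simpa using (sq_eq_sq_iff_eq_or_eq_neg.mp this)

theorem mem_spectrum_of_mul_self_eq_neg_one {A : Type*} [Ring A] [Algebra ℂ A] {k : A}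
    (hk : k * k = -1) {z : ℂ} (hz : z * z = -1) (hkz : k ≠ -algebraMap ℂ A z) :
    z ∈ spectrum ℂ k := by
  rw [spectrum.mem_iff]
  intro hunit
  have hzero : (algebraMap ℂ A z - k) * (algebraMap ℂ A z + k) = 0 := calc
    _ = algebraMap ℂ A (z * z) - k * k + (algebraMap ℂ A z * k - k * algebraMap ℂ A z) := by
      rw [map_mul]; noncomm_ring
    _ = 0 := by rw [hz, hk, Algebra.commutes, map_neg, map_one]; abel
  exact hkz (eq_neg_of_add_eq_zero_right (hunit.mul_right_eq_zero.mp hzero))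

theorem spectrum_eq_of_mul_self_eq_neg_one {A : Type*} [Ring A] [Algebra ℂ A] {k : A}
    (hk : k * k = -1) (hI : k ≠ algebraMap ℂ A I) (hnegI : k ≠ -algebraMap ℂ A I) :
    spectrum ℂ k = {I, -I} := by
  refine (spectrum_subset_of_mul_self_eq_neg_one hk).antisymm (Set.insert_subset_iff.mpr
    ⟨mem_spectrum_of_mul_self_eq_neg_one hk I_mul_I hnegI, Set.singleton_subset_iff.mpr ?_⟩)
  exact mem_spectrum_of_mul_self_eq_neg_one hk (by rw [neg_mul_neg, I_mul_I])
    (by rwa [map_neg, neg_neg])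

theorem spectrum_smul_one_add {A : Type*} [Ring A] [Algebra ℂ A] [Nontrivial A] {k : A}
    (hk : spectrum ℂ k = {I, -I}) (c : ℂ) :
    spectrum ℂ (c • (1 + k)) = {c * (1 + I), c * (1 - I)} := by
  have hshift : spectrum ℂ (1 + k) = {1 + I, 1 - I} := by
    rw [← map_one (algebraMap ℂ A), ← spectrum.singleton_add_eq, hk, Set.singleton_add,
      Set.image_pair, sub_eq_add_neg]
  rw [spectrum.smul_eq_smul _ _ (hshift ▸ Set.insert_nonempty _ _), hshift, Set.smul_set_insert,
    Set.smul_set_singleton, smul_eq_mul, smul_eq_mul]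

namespace Matrix

variable {l m n p α : Type*}

theorem neg_kronecker [Mul α] [HasDistribNeg α] (A : Matrix l m α) (B : Matrix n p α) :
    (-A) ⊗ₖ B = -(A ⊗ₖ B) := by
  ext; simp [neg_mul]

theorem kronecker_neg [Mul α] [HasDistribNeg α] (A : Matrix l m α) (B : Matrix n p α) :
    A ⊗ₖ (-B) = -(A ⊗ₖ B) := by
  ext; simp

end Matrix

section Amplification

variable {d : ℕ}

theorem amp1_eq_reindex_kronecker (R : MM d) :
    amp1 R = reindexAlgEquiv ℂ ℂ (Equiv.prodAssoc _ _ _) (R ⊗ₖ 1) := by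
  ext; simp [amp1, one_apply]

theorem amp2_eq_one_kronecker (R : MM d) : amp2 R = 1 ⊗ₖ R := by
  ext; simp [amp2, one_apply]

theorem amp1_smul_one_add_kronecker (c : ℂ) (A B : Matrix (Fin d) (Fin d) ℂ) :
    amp1 (c • (1 + A ⊗ₖ B)) = c • (1 + A ⊗ₖ (B ⊗ₖ 1)) := by
  rw [amp1_eq_reindex_kronecker, smul_kronecker, add_kronecker, one_kronecker_one, map_smul,
    map_add, map_one, coe_reindexAlgEquiv, reindex_apply, kronecker_assoc']

theorem amp2_smul_one_add_kronecker (c : ℂ) (A B : Matrix (Fin d) (Fin d) ℂ) :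
    amp2 (c • (1 + A ⊗ₖ B)) = c • (1 + 1 ⊗ₖ (A ⊗ₖ B)) := by
  rw [amp2_eq_one_kronecker, kronecker_smul, kronecker_add, one_kronecker_one]

theorem YBE_smul_one_add_kronecker (c : ℂ) {A B : Matrix (Fin d) (Fin d) ℂ} (hA : A * A = 1)
    (hB : B * B = -1) (hBA : B * A = -(A * B)) : YBE (c • (1 + A ⊗ₖ B)) := by
  have ha : A ⊗ₖ (B ⊗ₖ (1 : Matrix (Fin d) (Fin d) ℂ)) * A ⊗ₖ (B ⊗ₖ 1) = -1 := by
    rw [← mul_kronecker_mul, ← mul_kronecker_mul, hA, hB, mul_one, neg_kronecker,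
      one_kronecker_one, kronecker_neg, one_kronecker_one]
  have hb : (1 : Matrix (Fin d) (Fin d) ℂ) ⊗ₖ (A ⊗ₖ B) * 1 ⊗ₖ (A ⊗ₖ B) = -1 := by
    rw [← mul_kronecker_mul, ← mul_kronecker_mul, hA, hB, one_mul, kronecker_neg,
      one_kronecker_one, kronecker_neg, one_kronecker_one]
  have hab : A ⊗ₖ (B ⊗ₖ 1) * (1 : Matrix (Fin d) (Fin d) ℂ) ⊗ₖ (A ⊗ₖ B) =
      -(1 ⊗ₖ (A ⊗ₖ B) * A ⊗ₖ (B ⊗ₖ 1)) := by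
    simp only [← mul_kronecker_mul, mul_one, one_mul, hBA, neg_kronecker, kronecker_neg]
  rw [YBE, amp1_smul_one_add_kronecker, amp2_smul_one_add_kronecker]
  simp only [smul_mul_smul_comm]
  rw [braid_one_add_of_anticommute ha hb hab]

end Amplification

def pauliZ : Matrix (Fin 2) (Fin 2) ℂ := !![1, 0; 0, -1]

def iPauliY : Matrix (Fin 2) (Fin 2) ℂ := !![0, 1; -1, 0]

theorem pauliZ_mul_self : pauliZ * pauliZ = 1 := by
  simp [pauliZ, one_fin_two]

theorem iPauliY_mul_self : iPauliY * iPauliY = -1 := by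
  simp [iPauliY, one_fin_two]

theorem iPauliY_mul_pauliZ : iPauliY * pauliZ = -(pauliZ * iPauliY) := by
  simp [pauliZ, iPauliY]

theorem conjTranspose_pauliZ : pauliZᴴ = pauliZ := by
  ext i j; fin_cases i <;> fin_cases j <;> simp [pauliZ]

theorem conjTranspose_iPauliY : iPauliYᴴ = -iPauliY := by
  ext i j; fin_cases i <;> fin_cases j <;> simp [iPauliY]

theorem star_pauliZ_kronecker_iPauliY : star (pauliZ ⊗ₖ iPauliY) = -(pauliZ ⊗ₖ iPauliY) := by
  rw [star_eq_conjTranspose, conjTranspose_kronecker, conjTranspose_pauliZ, conjTranspose_iPauliY,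
    kronecker_neg]

theorem pauliZ_kronecker_iPauliY_mul_self : pauliZ ⊗ₖ iPauliY * pauliZ ⊗ₖ iPauliY = -1 := by
  rw [← mul_kronecker_mul, pauliZ_mul_self, iPauliY_mul_self, kronecker_neg, one_kronecker_one]

theorem spectrum_pauliZ_kronecker_iPauliY : spectrum ℂ (pauliZ ⊗ₖ iPauliY) = {I, -I} := by
  refine spectrum_eq_of_mul_self_eq_neg_one pauliZ_kronecker_iPauliY_mul_self ?_ ?_ <;>
  · intro h
    simpa [pauliZ, iPauliY, algebraMap_matrix_apply] using congr_fun₂ h (0, 0) (0, 1)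

theorem R4_eq_smul_one_add (q : ℂ) :
    R4 q = (q / (Real.sqrt 2 : ℂ)) • (1 + pauliZ ⊗ₖ iPauliY) := by
  ext ⟨a, b⟩ ⟨c, e⟩
  fin_cases a <;> fin_cases b <;> fin_cases c <;> fin_cases e <;> simp [R4, pauliZ, iPauliY]

/-- For `q` on the unit circle, `R₄` is unitary, solves the Yang-Baxter equation, and its
spectrum is `{q(1+i)/√2, q(1-i)/√2}`. -/
theorem R4_unitary_YBE_spectrum (q : ℂ) (hq : ‖q‖ = 1) :
    R4 q ∈ Matrix.unitaryGroup (Fin 2 × Fin 2) ℂ ∧ YBE (R4 q) ∧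
      spectrum ℂ (R4 q) =
        {q * (1 + Complex.I) / (Real.sqrt 2 : ℂ), q * (1 - Complex.I) / (Real.sqrt 2 : ℂ)} := by
  have hc : star (q / (Real.sqrt 2 : ℂ)) * (q / (Real.sqrt 2 : ℂ)) = 2⁻¹ := by
    rw [Complex.star_def, Complex.conj_mul']
    simp [hq, ← Complex.ofReal_pow]
  rw [R4_eq_smul_one_add]
  refine ⟨smul_one_add_mem_unitary star_pauliZ_kronecker_iPauliY
      pauliZ_kronecker_iPauliY_mul_self hc,
    YBE_smul_one_add_kronecker _ pauliZ_mul_self iPauliY_mul_self iPauliY_mul_pauliZ, ?_⟩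
  rw [spectrum_smul_one_add spectrum_pauliZ_kronecker_iPauliY, mul_div_right_comm,
    mul_div_right_comm]
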